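/- arXiv:1612.09162 — 2 statements merged into one kernel-verified Lean document; each statement's English description precedes it below -/
import Mathlib

section
/- Self-normalized importance sampling produces properly weighted samples: if x̃¹,…,x̃ᴹ are i.i.d. draws from a proposal density p with p > 0 wherever γ > 0, weights w^i = γ(x̃^i)/p(x̃^i), τ = (1/M)∑ᵢw^i, and x is chosen among x̃¹,…,x̃ᴹ with probability proportional to w^i, then the pair (x, τ) is properly weighted for γ with constant C = 1, i.e., E[h(x)·τ] = Z·∫h(x)π(x)dx for all bounded measurable h, where Z = ∫γ and π = γ/Z. -/
/-!
The selection probabilities `wʲ / ∑ₗ wˡ` cancel against the normalizer inside `τ`, so that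
`E[h(x) τ] = E[M⁻¹ ∑ⱼ wʲ h(x̃ʲ)]` (when all weights vanish both sides are `0`). Each `x̃ʲ` has law
`p μ`, and `(γ / p) · p = γ` because `p > 0` wherever `γ > 0`, so every summand has expectation
`∫ γ h dμ = Z π(h)`.
-/

open MeasureTheory Finset

theorem sum_div_sum_mul_mul_sum {ι : Type*} (s : Finset ι) {w : ι → ℝ} (hw : ∀ i ∈ s, 0 ≤ w i)
    (f : ι → ℝ) (c : ℝ) :
    (∑ j ∈ s, w j / (∑ l ∈ s, w l) * f j) * (c * ∑ i ∈ s, w i) = c * ∑ j ∈ s, w j * f j := by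
  rcases eq_or_ne (∑ l ∈ s, w l) 0 with hS | hS
  · have hw0 : ∀ i ∈ s, w i = 0 := (sum_eq_zero_iff_of_nonneg hw).mp hS
    have hwf : ∑ j ∈ s, w j * f j = 0 := sum_eq_zero fun i hi => by simp [hw0 i hi]
    simp [hS, hwf]
  · simp_rw [div_mul_eq_mul_div, ← sum_div]
    field_simp

theorem integral_sum_comp_eval_pi {ι X : Type*} [Fintype ι] [MeasurableSpace X] (ν : Measure X)
    [IsProbabilityMeasure ν] {F : X → ℝ} (hF : Integrable F ν) :
    ∫ xs, ∑ i, F (xs i) ∂Measure.pi (fun _ : ι => ν) = Fintype.card ι * ∫ y, F y ∂ν := by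
  rw [integral_finsetSum _ fun i _ => integrable_comp_eval hF]
  simp [integral_comp_eval (μ := fun _ : ι => ν) hF.aestronglyMeasurable]

section Density

variable {X : Type*} [MeasurableSpace X] {μ : Measure X} {p : X → ℝ}

theorem isProbabilityMeasure_withDensity_ofReal (hpnn : 0 ≤ᵐ[μ] p) (hp : ∫ y, p y ∂μ = 1) :
    IsProbabilityMeasure (μ.withDensity fun y => ENNReal.ofReal (p y)) := by
  have hpint : Integrable p μ := .of_integral_ne_zero (by simp [hp])
  constructor
  rw [withDensity_apply _ MeasurableSet.univ, Measure.restrict_univ,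
    ← ofReal_integral_eq_lintegral_ofReal hpint hpnn, hp, ENNReal.ofReal_one]

theorem integral_withDensity_ofReal (hpm : Measurable p) (hpnn : 0 ≤ᵐ[μ] p) (g : X → ℝ) :
    ∫ y, g y ∂μ.withDensity (fun y => ENNReal.ofReal (p y)) = ∫ y, p y * g y ∂μ := by
  rw [integral_withDensity_eq_integral_toReal_smul hpm.ennreal_ofReal
    (ae_of_all _ fun _ => ENNReal.ofReal_lt_top)]
  refine integral_congr_ae ?_
  filter_upwards [hpnn] with y hy
  rw [ENNReal.toReal_ofReal hy, smul_eq_mul]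

theorem integrable_withDensity_ofReal_iff (hpm : Measurable p) (hpnn : 0 ≤ᵐ[μ] p) {g : X → ℝ} :
    Integrable g (μ.withDensity fun y => ENNReal.ofReal (p y)) ↔
      Integrable (fun y => p y * g y) μ := by
  rw [integrable_withDensity_iff hpm.ennreal_ofReal (ae_of_all _ fun _ => ENNReal.ofReal_lt_top)]
  refine integrable_congr ?_
  filter_upwards [hpnn] with y hy
  rw [ENNReal.toReal_ofReal hy, mul_comm]

variable {γ : X → ℝ}

theorem integral_div_mul_withDensity_ofReal (hpm : Measurable p) (hpnn : 0 ≤ᵐ[μ] p)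
    (hsupp : ∀ y, p y = 0 → γ y = 0) (g : X → ℝ) :
    ∫ y, γ y / p y * g y ∂μ.withDensity (fun y => ENNReal.ofReal (p y)) = ∫ y, γ y * g y ∂μ := by
  simp_rw [integral_withDensity_ofReal hpm hpnn, ← mul_assoc, mul_div_cancel_of_imp' (hsupp _)]

theorem integrable_div_mul_withDensity_ofReal (hpm : Measurable p) (hpnn : 0 ≤ᵐ[μ] p)
    (hsupp : ∀ y, p y = 0 → γ y = 0) {g : X → ℝ} (hγg : Integrable (fun y => γ y * g y) μ) :
    Integrable (fun y => γ y / p y * g y) (μ.withDensity fun y => ENNReal.ofReal (p y)) := by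
  simpa only [integrable_withDensity_ofReal_iff hpm hpnn, ← mul_assoc,
    mul_div_cancel_of_imp' (hsupp _)] using hγg

end Density

theorem importance_sampling_properly_weighted_general
    {X : Type*} [MeasurableSpace X] (μ : Measure X)
    (M : ℕ) (hM : 0 < M)
    (γ p : X → ℝ) (hpm : Measurable p)
    (hγnn : ∀ y, 0 ≤ γ y) (hpnn : ∀ y, 0 ≤ p y)
    (hsupp : ∀ y, 0 < γ y → 0 < p y)
    (hpdens : ∫ y, p y ∂μ = 1)
    (hγint : Integrable γ μ)
    (Z : ℝ) (hZpos : 0 < Z)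
    (P : Measure (Fin M → X))
    (hP : P = Measure.pi fun _ => μ.withDensity fun y => ENNReal.ofReal (p y))
    (h : X → ℝ) (hmeas : Measurable h) (hbd : ∃ B, ∀ y, |h y| ≤ B) :
    ∫ xs, (∑ j, ((γ (xs j) / p (xs j)) / (∑ l, γ (xs l) / p (xs l))) * h (xs j))
        * ((M : ℝ)⁻¹ * ∑ i, γ (xs i) / p (xs i)) ∂P
      = Z * ∫ y, h y * (γ y / Z) ∂μ := by
  obtain ⟨B, hB⟩ := hbd
  have hp_ae : 0 ≤ᵐ[μ] p := ae_of_all _ hpnn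
  have hγ_zero : ∀ y, p y = 0 → γ y = 0 := fun y hp => by
    by_contra hγ
    exact (hsupp y ((hγnn y).lt_of_ne' hγ)).ne' hp
  have := isProbabilityMeasure_withDensity_ofReal hp_ae hpdens
  have hγh : Integrable (fun y => γ y * h y) μ :=
    hγint.mul_bdd hmeas.aestronglyMeasurable (ae_of_all _ hB)
  calc _ = ∫ xs, (M : ℝ)⁻¹ * ∑ j, γ (xs j) / p (xs j) * h (xs j) ∂P :=
        integral_congr_ae <| ae_of_all _ fun xs =>
          sum_div_sum_mul_mul_sum _ (fun i _ => div_nonneg (hγnn _) (hpnn _)) _ _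
    _ = (M : ℝ)⁻¹ * (M * ∫ y, γ y * h y ∂μ) := by
        rw [integral_const_mul, hP, integral_sum_comp_eval_pi _
          (integrable_div_mul_withDensity_ofReal hpm hp_ae hγ_zero hγh), Fintype.card_fin,
          integral_div_mul_withDensity_ofReal hpm hp_ae hγ_zero]
    _ = Z * ∫ y, h y * (γ y / Z) ∂μ := by
        simp_rw [← mul_div_assoc, integral_div, mul_comm (h _)]
        field_simp

/-- Self-normalized importance sampling produces properly weighted samples:
with i.i.d. draws x̃¹,…,x̃ᴹ from p, weights wⁱ = γ(x̃ⁱ)/p(x̃ⁱ), τ = M⁻¹∑wⁱ, and x drawn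
among the x̃ⁱ with probability ∝ wⁱ, the pair (x, τ) is properly weighted for γ with C = 1:
E[h(x)·τ] = Z·∫h·π for all bounded measurable h. -/
theorem importance_sampling_properly_weighted
    {X : Type*} [MeasurableSpace X] (μ : Measure X)
    (M : ℕ) (hM : 0 < M)
    (γ p : X → ℝ) (hγm : Measurable γ) (hpm : Measurable p)
    (hγnn : ∀ y, 0 ≤ γ y) (hpnn : ∀ y, 0 ≤ p y)
    (hsupp : ∀ y, 0 < γ y → 0 < p y)
    (hpdens : ∫ y, p y ∂μ = 1)
    (hγint : Integrable γ μ)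
    (Z : ℝ) (hZ : Z = ∫ y, γ y ∂μ) (hZpos : 0 < Z)
    (P : Measure (Fin M → X))
    (hP : P = Measure.pi fun _ => μ.withDensity fun y => ENNReal.ofReal (p y))
    (h : X → ℝ) (hmeas : Measurable h) (hbd : ∃ B, ∀ y, |h y| ≤ B) :
    ∫ xs, (∑ j, ((γ (xs j) / p (xs j)) / (∑ l, γ (xs l) / p (xs l))) * h (xs j))
        * ((M : ℝ)⁻¹ * ∑ i, γ (xs i) / p (xs i)) ∂P
      = Z * ∫ y, h y * (γ y / Z) ∂μ :=
  importance_sampling_properly_weighted_general μ M hM γ p hpm hγnn hpnn hsupp hpdens hγint Z hZpos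
    P hP h hmeas hbd
end

section
/- Sampling from the empirical SMC measure yields proper weighting: if (x^i, w^i)_{i=1}^M are such that E[∑ᵢw^i·h(x^i)] = M·Z·π(h) for all bounded measurable h (the SMC unbiasedness property), and x is drawn from ∑ᵢ(w^i/∑ₗw^ℓ)δ_{x^i} with τ = M⁻¹∑ᵢw^i, then (x, τ) is properly weighted for γ = Z·π with constant 1. -/
open MeasureTheory

/-- Sampling from the empirical SMC measure yields proper weighting: if the
weighted particles satisfy E[∑ᵢwⁱh(xⁱ)] = M·Z·π(h) for all bounded measurable h, and x is
drawn from ∑ᵢ(wⁱ/∑ₗwˡ)δ_{xⁱ} with τ = M⁻¹∑ᵢwⁱ, then (x, τ) is properly weighted for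
γ = Z·π with constant 1: E[h(x)·τ] = Z·π(h). -/
theorem empirical_smc_properly_weighted
    {X Ω : Type*} [MeasurableSpace X] [MeasurableSpace Ω]
    (μ : Measure X) (P : Measure Ω) [IsProbabilityMeasure P]
    (π : X → ℝ) (hπnn : ∀ y, 0 ≤ π y) (hπdens : ∫ y, π y ∂μ = 1)
    (Z : ℝ) (hZpos : 0 < Z)
    (M : ℕ) (hM : 0 < M)
    (xp : Fin M → Ω → X) (w : Fin M → Ω → ℝ)
    (hwnn : ∀ i ω, 0 ≤ w i ω)
    (hwpos : ∀ᵐ ω ∂P, 0 < ∑ i, w i ω)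
    (hunbiased : ∀ h : X → ℝ, Measurable h → (∃ B, ∀ y, |h y| ≤ B) →
      ∫ ω, ∑ i, w i ω * h (xp i ω) ∂P = (M : ℝ) * Z * ∫ y, h y * π y ∂μ) :
    ∀ h : X → ℝ, Measurable h → (∃ B, ∀ y, |h y| ≤ B) →
      ∫ ω, (∑ j, (w j ω / ∑ l, w l ω) * h (xp j ω)) * ((M : ℝ)⁻¹ * ∑ i, w i ω) ∂P
        = Z * ∫ y, h y * π y ∂μ := by
  intro h hm hb
  have key : ∀ᵐ ω ∂P,
      (∑ j, (w j ω / ∑ l, w l ω) * h (xp j ω)) * ((M : ℝ)⁻¹ * ∑ i, w i ω)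
        = (M : ℝ)⁻¹ * ∑ i, w i ω * h (xp i ω) := by
    filter_upwards [hwpos] with ω hS
    have hSne : (∑ l, w l ω) ≠ 0 := ne_of_gt hS
    have : (∑ j, (w j ω / ∑ l, w l ω) * h (xp j ω))
        = (∑ j, w j ω * h (xp j ω)) / ∑ l, w l ω := by
      rw [Finset.sum_div]
      exact Finset.sum_congr rfl fun j _ => by ring
    rw [this]
    field_simp
  rw [integral_congr_ae key, integral_const_mul, hunbiased h hm hb]
  have hMne : (M : ℝ) ≠ 0 := Nat.cast_ne_zero.mpr hM.ne'
  field_simp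
end
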